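/- Let N be a CCI-envelope of a CCI X of size k ≥ 4, and let (J; X₁, X₂) and (J'; X₁', X₂') be hyperplane-partitions with J ≠ J'. If the common refinement {X_i ∩ X_j' : nonempty} has exactly 3 blocks, then every block has size at least 2. -/

import Mathlib

open Set

namespace Matroid

variable {α : Type*}

/-- A circuit: a minimal dependent set. -/
def IsCircuit₀ (M : Matroid α) (C : Set α) : Prop :=
  C ⊆ M.E ∧ ¬ M.Indep C ∧ ∀ D, D ⊂ C → M.Indep D

/-- A cocircuit: a circuit of the dual matroid. -/
def IsCocircuit₀ (M : Matroid α) (C : Set α) : Prop :=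
  M✶.IsCircuit₀ C

/-- A circuit-cocircuit intersection (CCI). -/
def IsCCI (M : Matroid α) (X : Set α) : Prop :=
  ∃ C K, M.IsCircuit₀ C ∧ M.IsCocircuit₀ K ∧ X = C ∩ K

/-- A hyperplane: a maximal proper flat. -/
def IsHyperplane (M : Matroid α) (H : Set α) : Prop :=
  M.IsFlat H ∧ H ≠ M.E ∧ ∀ F, M.IsFlat F → H ⊂ F → F = M.E

/-- The rank of a set: the largest size of an independent subset. -/
noncomputable def rk (M : Matroid α) (A : Set α) : ℕ :=
  sSup {n | ∃ I, I ⊆ A ∧ M.Indep I ∧ I.ncard = n}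

/-- The rank of a matroid. -/
noncomputable def rank (M : Matroid α) : ℕ := M.rk M.E

/-- Deletion of a set from a matroid. -/
def del (M : Matroid α) (D : Set α) : Matroid α := M.restrict (M.E \ D)

/-- Contraction of a set in a matroid. -/
def con (M : Matroid α) (C : Set α) : Matroid α := (M✶.restrict (M.E \ C))✶

/-- `N` is a minor of `M` if it is obtained by a contraction followed by a deletion. -/
def IsMinor₀ (N M : Matroid α) : Prop := ∃ C D, N = (M.con C).del D

end Matroid

open Matroid

/-!
Exactly one of the four blocks `Xᵢ ∩ Xⱼ'` is empty. If the empty block shares a row or a column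
with a singleton block, that singleton is a whole part `Xᵢ` or `Xⱼ'`; but every part of a
hyperplane-partition has at least two elements, since a part `{e}` would put the base `X \ {e}`
inside a hyperplane. Otherwise, up to relabelling, `X₁ ∩ X₁' = {f}` and `X₂ ∩ X₂' = ∅`. Then
`X \ {f} ⊆ X₂ ∪ X₂'` is a base, and `W = J ∩ J'` (of size `k - 4`) is independent, being disjoint
from the cobase `X \ {f}`; so some base `I` has `W ⊆ I ⊆ W ∪ X₂ ∪ X₂'`. The set `I ∩ (W ∪ X₂)`
lies in the two distinct hyperplanes `J ∪ X₂` and `J' ∪ X₁'`, so it has at most `k - 3` elements,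
and likewise for `X₂'`. Counting, `(k - 1) + (k - 4) ≤ 2 (k - 3)`, a contradiction.
-/

def commonRefinement {α : Type*} (X₁ X₂ X₁' X₂' : Set α) : Set (Set α) :=
  {Z | Z.Nonempty ∧ ∃ A ∈ ({X₁, X₂} : Set (Set α)), ∃ B ∈ ({X₁', X₂'} : Set (Set α)), Z = A ∩ B}

section commonRefinement

variable {α : Type*} {X₁ X₂ X₁' X₂' : Set α}

theorem commonRefinement_swap_left :
    commonRefinement X₂ X₁ X₁' X₂' = commonRefinement X₁ X₂ X₁' X₂' := by
  rw [commonRefinement, commonRefinement, pair_comm]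

theorem commonRefinement_swap_right :
    commonRefinement X₁ X₂ X₂' X₁' = commonRefinement X₁ X₂ X₁' X₂' := by
  rw [commonRefinement, commonRefinement, pair_comm X₂']

theorem ncard_commonRefinement_eq_four (h : Disjoint X₁ X₂) (h' : Disjoint X₁' X₂')
    (h₁₁ : (X₁ ∩ X₁').Nonempty) (h₁₂ : (X₁ ∩ X₂').Nonempty) (h₂₁ : (X₂ ∩ X₁').Nonempty)
    (h₂₂ : (X₂ ∩ X₂').Nonempty) : (commonRefinement X₁ X₂ X₁' X₂').ncard = 4 := by
  have hrow {A B : Set α} (hA : A ⊆ X₁) (hB : B ⊆ X₂) (hne : A.Nonempty) : A ≠ B :=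
    (h.mono hA hB).ne hne.ne_empty
  have hcol {A B : Set α} (hA : A ⊆ X₁') (hB : B ⊆ X₂') (hne : A.Nonempty) : A ≠ B :=
    (h'.mono hA hB).ne hne.ne_empty
  have hS : commonRefinement X₁ X₂ X₁' X₂' = {X₁ ∩ X₁', X₁ ∩ X₂', X₂ ∩ X₁', X₂ ∩ X₂'} := by
    ext Z
    simp only [commonRefinement, mem_insert_iff, mem_singleton_iff, mem_ofPred_eq]
    constructor
    · rintro ⟨-, A, rfl | rfl, B, rfl | rfl, rfl⟩ <;> simp
    · rintro (rfl | rfl | rfl | rfl) <;> refine ⟨by assumption, _, by simp, _, by simp, rfl⟩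
  rw [hS, ncard_insert_of_notMem, ncard_insert_of_notMem, ncard_pair]
  · exact hcol inter_subset_right inter_subset_right h₂₁
  · simp only [mem_insert_iff, mem_singleton_iff, not_or]
    exact ⟨hrow inter_subset_left inter_subset_left h₁₂,
      hrow inter_subset_left inter_subset_left h₁₂⟩
  · simp only [mem_insert_iff, mem_singleton_iff, not_or]
    exact ⟨hcol inter_subset_right inter_subset_right h₁₁,
      hrow inter_subset_left inter_subset_left h₁₁, hrow inter_subset_left inter_subset_left h₁₁⟩

end commonRefinement

theorem Set.ncard_inter_union_add_ncard_inter_union {α : Type*} {I W A B : Set α} (hI : I.Finite)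
    (hWI : W ⊆ I) (hIW : I ⊆ W ∪ (A ∪ B)) (hAB : Disjoint A B) :
    (I ∩ (W ∪ A)).ncard + (I ∩ (W ∪ B)).ncard = I.ncard + W.ncard := by
  have hunion : I ∩ (W ∪ A) ∪ I ∩ (W ∪ B) = I := by
    rw [← inter_union_distrib_left, ← union_union_distrib_left, inter_eq_left.2 hIW]
  have hinter : I ∩ (W ∪ A) ∩ (I ∩ (W ∪ B)) = W := by
    rw [inter_inter_inter_comm, inter_self, ← union_inter_distrib_left, hAB.inter_eq, union_empty,
      inter_eq_right.2 hWI]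
  rw [← ncard_union_add_ncard_inter _ _ (hI.subset inter_subset_left)
    (hI.subset inter_subset_left), hunion, hinter]

namespace Matroid

variable {α : Type*} {M N : Matroid α} {B I C K F F' X J X₁ X₂ J' X₁' X₂' A : Set α} {e f : α}
  {k : ℕ}

theorem IsFlat.eq_ground_of_isBase_subset (hF : M.IsFlat F) (hB : M.IsBase B) (hBF : B ⊆ F) :
    F = M.E :=
  hF.subset_ground.antisymm (hB.closure_eq ▸ hF.closure ▸ M.closure_subset_closure hBF)

section RankFinite

variable [M.RankFinite]

theorem IsBase.ncard_eq_rank (hB : M.IsBase B) : B.ncard = M.rank := by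
  have hbdd : ∀ n ∈ {n | ∃ I, I ⊆ M.E ∧ M.Indep I ∧ I.ncard = n}, n ≤ B.ncard := by
    rintro n ⟨I, -, hI, rfl⟩
    obtain ⟨B', hB', hIB'⟩ := hI.exists_isBase_superset
    exact (ncard_le_ncard hIB' hB'.finite).trans (hB'.ncard_eq_ncard_of_isBase hB).le
  have hB_mem : B.ncard ∈ {n | ∃ I, I ⊆ M.E ∧ M.Indep I ∧ I.ncard = n} :=
    ⟨B, hB.subset_ground, hB.indep, rfl⟩
  exact le_antisymm (le_csSup ⟨_, hbdd⟩ hB_mem) (csSup_le ⟨_, hB_mem⟩ hbdd)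

theorem Indep.ncard_le_rank (hI : M.Indep I) : I.ncard ≤ M.rank := by
  obtain ⟨B, hB, hIB⟩ := hI.exists_isBase_superset
  exact hB.ncard_eq_rank ▸ ncard_le_ncard hIB hB.finite

theorem Indep.isBase_of_rank_le_ncard (hI : M.Indep I) (h : M.rank ≤ I.ncard) : M.IsBase I := by
  obtain ⟨B, hB, hIB⟩ := hI.exists_isBase_superset
  rwa [eq_of_subset_of_ncard_le hIB (hB.ncard_eq_rank ▸ h) hB.finite]

theorem IsFlat.ncard_lt_rank_of_indep_subset (hF : M.IsFlat F) (hFE : F ≠ M.E) (hI : M.Indep I)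
    (hIF : I ⊆ F) : I.ncard < M.rank :=
  hI.ncard_le_rank.lt_of_not_ge fun h ↦
    hFE (hF.eq_ground_of_isBase_subset (hI.isBase_of_rank_le_ncard h) hIF)

theorem IsFlat.eq_closure_of_indep_subset (hF : M.IsFlat F) (hFE : F ≠ M.E) (hI : M.Indep I)
    (hIF : I ⊆ F) (hcard : I.ncard + 1 = M.rank) : F = M.closure I := by
  refine ((hI.isBasis_of_forall_insert hIF fun e he ↦ ?_).closure_eq_closure.trans hF.closure).symm
  have heI : insert e I ⊆ F := insert_subset he.1 hIF
  refine (not_indep_iff (heI.trans hF.subset_ground)).mp fun hins ↦ ?_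
  have := hF.ncard_lt_rank_of_indep_subset hFE hins heI
  rw [ncard_insert_of_notMem he.2 hI.finite] at this
  omega

theorem IsFlat.ncard_add_one_lt_rank_of_indep_subset_inter (hF : M.IsFlat F) (hFE : F ≠ M.E)
    (hF' : M.IsFlat F') (hF'E : F' ≠ M.E) (hne : F ≠ F') (hI : M.Indep I) (hIF : I ⊆ F ∩ F') :
    I.ncard + 1 < M.rank := by
  refine lt_of_le_of_ne (hF.ncard_lt_rank_of_indep_subset hFE hI (hIF.trans inter_subset_left))
    fun h ↦ hne ?_
  rw [hF.eq_closure_of_indep_subset hFE hI (hIF.trans inter_subset_left) h,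
    hF'.eq_closure_of_indep_subset hF'E hI (hIF.trans inter_subset_right) h]

theorem IsCircuit₀.isBase_diff_singleton (hC : M.IsCircuit₀ C) (he : e ∈ C)
    (hcard : C.ncard = M.rank + 1) : M.IsBase (C \ {e}) :=
  (hC.2.2 _ (sdiff_singleton_ssubset.2 he)).isBase_of_rank_le_ncard
    (by rw [ncard_sdiff_singleton_of_mem he]; omega)

end RankFinite

theorem IsCocircuit₀.isBase_compl_diff_singleton [M✶.RankFinite] (hK : M.IsCocircuit₀ K)
    (he : e ∈ K) (hcard : K.ncard = M✶.rank + 1) : M.IsBase (M.E \ (K \ {e})) :=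
  (IsCircuit₀.isBase_diff_singleton hK he hcard).compl_isBase_of_dual

structure IsCCIEnvelope (N : Matroid α) (X : Set α) (k : ℕ) : Prop where
  four_le : 4 ≤ k
  ncard_ground : N.E.ncard = 2 * k - 2
  rank_eq : N.rank = k - 1
  dual_rank_eq : N✶.rank = k - 1
  ncard_eq : X.ncard = k
  isCircuit : N.IsCircuit₀ X
  isCocircuit : N.IsCocircuit₀ X

structure IsHyperplanePartition (N : Matroid α) (X : Set α) (k : ℕ) (J X₁ X₂ : Set α) :
    Prop where
  subset_diff : J ⊆ N.E \ X
  ncard_eq : J.ncard = k - 3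
  union_eq : X₁ ∪ X₂ = X
  disjoint : Disjoint X₁ X₂
  isHyperplane_left : N.IsHyperplane (J ∪ X₁)
  isHyperplane_right : N.IsHyperplane (J ∪ X₂)

namespace IsHyperplanePartition

theorem symm (hP : N.IsHyperplanePartition X k J X₁ X₂) : N.IsHyperplanePartition X k J X₂ X₁ :=
  ⟨hP.subset_diff, hP.ncard_eq, union_comm X₂ X₁ ▸ hP.union_eq, hP.disjoint.symm,
    hP.isHyperplane_right, hP.isHyperplane_left⟩

theorem left_subset (hP : N.IsHyperplanePartition X k J X₁ X₂) : X₁ ⊆ X :=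
  hP.union_eq ▸ subset_union_left

theorem right_subset (hP : N.IsHyperplanePartition X k J X₁ X₂) : X₂ ⊆ X :=
  hP.union_eq ▸ subset_union_right

theorem union_diff_eq (hP : N.IsHyperplanePartition X k J X₁ X₂) (hA : A ⊆ X) :
    (J ∪ A) \ X = J := by
  have hJX : Disjoint J X := (subset_sdiff.1 hP.subset_diff).2
  rw [union_sdiff_distrib, sdiff_eq_empty.2 hA, union_empty, hJX.sdiff_eq_left]

theorem subset_left_of_inter_right_eq_empty (hP : N.IsHyperplanePartition X k J X₁ X₂)
    (hA : A ⊆ X) (h : A ∩ X₂ = ∅) : A ⊆ X₁ :=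
  (disjoint_iff_inter_eq_empty.2 h).subset_left_of_subset_union (hP.union_eq ▸ hA)

theorem ncard_add_one_lt_rank [N.RankFinite]
    (hP : N.IsHyperplanePartition X k J X₁ X₂) (hP' : N.IsHyperplanePartition X k J' X₁' X₂')
    (hJJ' : J ≠ J') (hX₂ : X₂ ⊆ X₁') (hI : N.Indep I) (hIJ : I ⊆ (J ∩ J') ∪ X₂) :
    I.ncard + 1 < N.rank := by
  have hne : J ∪ X₂ ≠ J' ∪ X₁' := fun h ↦
    hJJ' (by rw [← hP.union_diff_eq hP.right_subset, h, hP'.union_diff_eq hP'.left_subset])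
  refine hP.isHyperplane_right.1.ncard_add_one_lt_rank_of_indep_subset_inter
    hP.isHyperplane_right.2.1 hP'.isHyperplane_left.1 hP'.isHyperplane_left.2.1 hne hI
    (subset_inter ?_ ?_)
  · exact hIJ.trans (union_subset_union_left _ inter_subset_left)
  · exact hIJ.trans (union_subset_union inter_subset_right hX₂)

end IsHyperplanePartition

namespace IsCCIEnvelope

theorem finite (hN : N.IsCCIEnvelope X k) : N.Finite :=
  ⟨finite_of_ncard_ne_zero (by have := hN.four_le; rw [hN.ncard_ground]; omega)⟩

theorem finite_of_subset (hN : N.IsCCIEnvelope X k) (hA : A ⊆ X) : A.Finite :=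
  hN.finite.ground_finite.subset (hA.trans hN.isCircuit.1)

theorem isBase_diff_singleton (hN : N.IsCCIEnvelope X k) (hf : f ∈ X) : N.IsBase (X \ {f}) :=
  have := hN.finite
  hN.isCircuit.isBase_diff_singleton hf
    (by rw [hN.ncard_eq, hN.rank_eq]; have := hN.four_le; omega)

theorem isBase_compl_diff_singleton (hN : N.IsCCIEnvelope X k) (hf : f ∈ X) :
    N.IsBase (N.E \ (X \ {f})) :=
  have := hN.finite
  IsCocircuit₀.isBase_compl_diff_singleton hN.isCocircuit hf
    (by rw [hN.ncard_eq, hN.dual_rank_eq]; have := hN.four_le; omega)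

theorem right_nonempty (hN : N.IsCCIEnvelope X k) (hP : N.IsHyperplanePartition X k J X₁ X₂) :
    X₂.Nonempty := by
  rw [nonempty_iff_ne_empty]
  rintro rfl
  have hX₁ : X₁ = X := by simpa using hP.union_eq
  have hXne : X.Nonempty :=
    nonempty_of_ncard_ne_zero (by have := hN.four_le; rw [hN.ncard_eq]; omega)
  have hJX : J ⊂ J ∪ X₁ := left_lt_sup.2 fun h ↦
    hXne.ne_empty (disjoint_self.1 ((subset_sdiff.1 hP.subset_diff).2.mono_left (hX₁ ▸ h)))
  have hground : J ∪ X₁ = N.E :=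
    hP.isHyperplane_right.2.2 _ hP.isHyperplane_left.1 (by rwa [union_empty])
  have := ncard_union_le J X₁
  rw [hground, hN.ncard_ground, hP.ncard_eq, hX₁, hN.ncard_eq] at this
  have := hN.four_le
  omega

theorem ncard_right_ne_one (hN : N.IsCCIEnvelope X k) (hP : N.IsHyperplanePartition X k J X₁ X₂) :
    X₂.ncard ≠ 1 := by
  intro h
  obtain ⟨e, rfl⟩ := ncard_eq_one.1 h
  have hsub : X \ {e} ⊆ J ∪ X₁ := by
    rw [← hP.union_eq, union_sdiff_right]
    exact sdiff_subset.trans subset_union_right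
  exact hP.isHyperplane_left.2.1 (hP.isHyperplane_left.1.eq_ground_of_isBase_subset
    (hN.isBase_diff_singleton (hP.right_subset rfl)) hsub)

theorem two_le_ncard_right (hN : N.IsCCIEnvelope X k) (hP : N.IsHyperplanePartition X k J X₁ X₂) :
    2 ≤ X₂.ncard := by
  have := (ncard_pos (hN.finite_of_subset hP.right_subset)).2 (hN.right_nonempty hP)
  have := hN.ncard_right_ne_one hP
  omega

theorem exists_isBase_of_inter_eq_singleton (hN : N.IsCCIEnvelope X k)
    (hP : N.IsHyperplanePartition X k J X₁ X₂) (hP' : N.IsHyperplanePartition X k J' X₁' X₂')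
    (hf : X₁ ∩ X₁' = {f}) : ∃ I, N.IsBase I ∧ J ∩ J' ⊆ I ∧ I ⊆ (J ∩ J') ∪ (X₂ ∪ X₂') := by
  have hfX : f ∈ X := hP.left_subset (hf ▸ mem_singleton f : f ∈ X₁ ∩ X₁').1
  have hW : N.Indep (J ∩ J') := (hN.isBase_compl_diff_singleton hfX).indep.subset
    (inter_subset_left.trans (hP.subset_diff.trans (sdiff_subset_sdiff_right sdiff_subset)))
  have hXf : X \ {f} ⊆ X₂ ∪ X₂' := by
    rintro x ⟨hx, hxf⟩
    rw [← hP.union_eq] at hx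
    have hx' : x ∈ X₁' ∪ X₂' := hP'.union_eq ▸ hP.union_eq ▸ hx
    rcases hx with hx₁ | hx₂
    · exact hx'.imp (fun hx₁' ↦ absurd (hf ▸ ⟨hx₁, hx₁'⟩) hxf) id
    · exact Or.inl hx₂
  have hground : (J ∩ J') ∪ (X₂ ∪ X₂') ⊆ N.E :=
    union_subset (inter_subset_left.trans (hP.subset_diff.trans sdiff_subset))
      (union_subset (hP.right_subset.trans hN.isCircuit.1) (hP'.right_subset.trans hN.isCircuit.1))
  obtain ⟨I, hI, hWI⟩ := hW.subset_isBasis_of_subset subset_union_left hground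
  exact ⟨I, (hN.isBase_diff_singleton hfX).isBase_of_isBasis_superset
    (hXf.trans subset_union_right) hI, hWI, hI.subset⟩

theorem inter_nonempty_of_inter_eq_singleton (hN : N.IsCCIEnvelope X k)
    (hP : N.IsHyperplanePartition X k J X₁ X₂) (hP' : N.IsHyperplanePartition X k J' X₁' X₂')
    (hJJ' : J ≠ J') (hf : X₁ ∩ X₁' = {f}) : (X₂ ∩ X₂').Nonempty := by
  have := hN.finite
  rw [nonempty_iff_ne_empty]
  intro h₂₂
  have hX₂ : X₂ ⊆ X₁' := hP'.subset_left_of_inter_right_eq_empty hP.right_subset h₂₂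
  have hX₂' : X₂' ⊆ X₁ :=
    hP.subset_left_of_inter_right_eq_empty hP'.right_subset (inter_comm X₂ X₂' ▸ h₂₂)
  obtain ⟨I, hI, hWI, hIW⟩ := hN.exists_isBase_of_inter_eq_singleton hP hP' hf
  have h₂ := hP.ncard_add_one_lt_rank hP' hJJ' hX₂ (hI.indep.inter_right _) inter_subset_right
  have h₂' := hP'.ncard_add_one_lt_rank hP hJJ'.symm hX₂' (hI.indep.inter_right (J ∩ J' ∪ X₂'))
    (by rw [inter_comm J' J]; exact inter_subset_right)
  have hcount := ncard_inter_union_add_ncard_inter_union hI.finite hWI hIW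
    (disjoint_iff_inter_eq_empty.2 h₂₂)
  have hY : (N.E \ X).Finite := N.ground_finite.sdiff
  have hW : J.ncard + J'.ncard ≤ (J ∩ J').ncard + (N.E \ X).ncard := by
    rw [← ncard_union_add_ncard_inter J J' (hY.subset hP.subset_diff) (hY.subset hP'.subset_diff),
      add_comm]
    exact Nat.add_le_add_left (ncard_le_ncard (union_subset hP.subset_diff hP'.subset_diff) hY) _
  rw [ncard_sdiff hN.isCircuit.1 (hN.finite_of_subset subset_rfl), hN.ncard_ground,
    hN.ncard_eq, hP.ncard_eq, hP'.ncard_eq] at hW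
  rw [hI.ncard_eq_rank, hN.rank_eq] at hcount
  rw [hN.rank_eq] at h₂ h₂'
  have := hN.four_le
  omega

theorem two_le_ncard_inter (hN : N.IsCCIEnvelope X k)
    (hP : N.IsHyperplanePartition X k J X₁ X₂) (hP' : N.IsHyperplanePartition X k J' X₁' X₂')
    (hJJ' : J ≠ J') (h3 : (commonRefinement X₁ X₂ X₁' X₂').ncard = 3)
    (hne : (X₁ ∩ X₁').Nonempty) : 2 ≤ (X₁ ∩ X₁').ncard := by
  by_contra! hlt
  have hpos := (ncard_pos (hN.finite_of_subset (inter_subset_left.trans hP.left_subset))).2 hne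
  obtain ⟨f, hf⟩ : ∃ f, X₁ ∩ X₁' = {f} := ncard_eq_one.1 (by omega)
  have hempty : X₁ ∩ X₂' = ∅ ∨ X₂ ∩ X₁' = ∅ ∨ X₂ ∩ X₂' = ∅ := by
    by_contra! h
    have := ncard_commonRefinement_eq_four hP.disjoint hP'.disjoint hne h.1 h.2.1 h.2.2
    omega
  rcases hempty with h₁₂ | h₂₁ | h₂₂
  · have hsub : X₁ ⊆ X₁' := hP'.subset_left_of_inter_right_eq_empty hP.left_subset h₁₂
    have := hN.two_le_ncard_right hP.symm
    rw [inter_eq_left.2 hsub] at hlt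
    omega
  · have hsub : X₁' ⊆ X₁ :=
      hP.subset_left_of_inter_right_eq_empty hP'.left_subset (inter_comm X₂ X₁' ▸ h₂₁)
    have := hN.two_le_ncard_right hP'.symm
    rw [inter_eq_right.2 hsub] at hlt
    omega
  · exact (hN.inter_nonempty_of_inter_eq_singleton hP hP' hJJ' hf).ne_empty h₂₂

end IsCCIEnvelope

end Matroid

theorem stmt_8 {α : Type*} (N : Matroid α) (k : ℕ) (hk : 4 ≤ k)
    (hE : N.E.ncard = 2 * k - 2) (hr : N.rank = k - 1) (hr' : N✶.rank = k - 1)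
    (X : Set α) (hXcard : X.ncard = k)
    (hXc : N.IsCircuit₀ X) (hXcc : N.IsCocircuit₀ X)
    (J X₁ X₂ : Set α) (hJ : J ⊆ N.E \ X) (hJcard : J.ncard = k - 3)
    (hX₁₂ : X₁ ∪ X₂ = X) (hdisj : Disjoint X₁ X₂)
    (hH₁ : N.IsHyperplane (J ∪ X₁)) (hH₂ : N.IsHyperplane (J ∪ X₂))
    (J' X₁' X₂' : Set α) (hJ' : J' ⊆ N.E \ X) (hJ'card : J'.ncard = k - 3)
    (hX₁₂' : X₁' ∪ X₂' = X) (hdisj' : Disjoint X₁' X₂')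
    (hH₁' : N.IsHyperplane (J' ∪ X₁')) (hH₂' : N.IsHyperplane (J' ∪ X₂'))
    (hJJ' : J ≠ J')
    (h3 : {Z : Set α | Z.Nonempty ∧ ∃ A ∈ ({X₁, X₂} : Set (Set α)),
            ∃ B ∈ ({X₁', X₂'} : Set (Set α)), Z = A ∩ B}.ncard = 3) :
    ∀ Z ∈ {Z : Set α | Z.Nonempty ∧ ∃ A ∈ ({X₁, X₂} : Set (Set α)),
            ∃ B ∈ ({X₁', X₂'} : Set (Set α)), Z = A ∩ B}, 2 ≤ Z.ncard := by
  have hN : N.IsCCIEnvelope X k := ⟨hk, hE, hr, hr', hXcard, hXc, hXcc⟩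
  have hP : N.IsHyperplanePartition X k J X₁ X₂ := ⟨hJ, hJcard, hX₁₂, hdisj, hH₁, hH₂⟩
  have hP' : N.IsHyperplanePartition X k J' X₁' X₂' := ⟨hJ', hJ'card, hX₁₂', hdisj', hH₁', hH₂'⟩
  change (commonRefinement X₁ X₂ X₁' X₂').ncard = 3 at h3
  rintro _ ⟨hne, A, hA, B, hB, rfl⟩
  obtain rfl | rfl := hA <;> obtain rfl | rfl := hB
  · exact hN.two_le_ncard_inter hP hP' hJJ' h3 hne
  · exact hN.two_le_ncard_inter hP hP'.symm hJJ' (by rwa [commonRefinement_swap_right]) hne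
  · exact hN.two_le_ncard_inter hP.symm hP' hJJ' (by rwa [commonRefinement_swap_left]) hne
  · exact hN.two_le_ncard_inter hP.symm hP'.symm hJJ'
      (by rwa [commonRefinement_swap_left, commonRefinement_swap_right]) hne
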